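/- arXiv:0909.5162 — 4 statements merged into one kernel-verified Lean document; each statement's English description precedes it below -/
import Mathlib

section
/- Let A be an n×n matrix with non-negative real entries. Then for any k ≤ n there exists a subset F of {1,…,n} with |F| = k such that the sum of off-diagonal entries A_{i,j} over i,j ∈ F with i ≠ j is at most (k²/n²) times the sum of all off-diagonal entries of A. -/
/-!
Average over all `k`-subsets `F` of the index set. An off-diagonal pair `i ≠ j` lies in
`choose (n - 2) (k - 2)` of the `choose n k` subsets, a proportion `k (k - 1) / (n (n - 1)) ≤ k² / n²`,
so the average of `∑_{i ≠ j ∈ F} A i j` is at most `k² / n²` times the full off-diagonal sum, and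
some `F` does no worse than the average.
-/

open Finset

section

variable {α : Type*} [DecidableEq α] [Fintype α]

theorem sum_sum_sum_mem_eq_sum_sum_card_mul (𝒜 : Finset (Finset α)) (w : α → α → ℝ) :
    ∑ F ∈ 𝒜, ∑ i ∈ F, ∑ j ∈ F, w i j = ∑ i, ∑ j, (#{F ∈ 𝒜 | {i, j} ⊆ F} : ℝ) * w i j := by
  have hmem (F : Finset α) : ∑ i ∈ F, ∑ j ∈ F, w i j
      = ∑ i, ∑ j, if {i, j} ⊆ F then w i j else 0 := by
    simp only [insert_subset_iff, singleton_subset_iff, ite_and, sum_ite_irrel, sum_const_zero,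
      sum_ite_mem, univ_inter]
  simp only [sum_congr rfl fun F _ => hmem F, card_filter, Nat.cast_sum, sum_mul]
  rw [sum_comm]
  refine sum_congr rfl fun i _ => ?_
  rw [sum_comm]
  simp

theorem card_filter_pair_subset_powersetCard_le {i j : α} (hij : i ≠ j) {k : ℕ}
    (hk : k ≤ Fintype.card α) :
    (#{F ∈ powersetCard k univ | {i, j} ⊆ F} : ℝ)
      ≤ (k : ℝ) ^ 2 / (Fintype.card α : ℝ) ^ 2 * (Fintype.card α).choose k := by
  set n := Fintype.card α
  have hpair : #{i, j} = 2 := card_pair hij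
  rcases lt_or_ge k 2 with hk2 | hk2
  · have hempty : {F ∈ powersetCard k (univ : Finset α) | {i, j} ⊆ F} = ∅ := by
      refine filter_false_of_mem fun F hF hsub => ?_
      have hcard := card_le_card hsub
      rw [hpair, (mem_powersetCard.mp hF).2] at hcard
      omega
    rw [hempty, card_empty, Nat.cast_zero]
    positivity
  have hn2 : 2 ≤ n := hpair ▸ card_le_univ {i, j}
  rw [card_filter_powersetCard_subset _ _ _ (subset_univ _) (hpair ▸ hk2), hpair, card_univ]
  have hchoose := congrArg (Nat.cast (R := ℝ)) (Nat.choose_mul (n := n) hk2)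
  push_cast [Nat.cast_choose_two] at hchoose
  have hn : (2 : ℝ) ≤ n := by exact_mod_cast hn2
  have hkn : (k : ℝ) ≤ n := by exact_mod_cast hk
  rw [div_mul_eq_mul_div, le_div_iff₀ (by positivity)]
  -- `hchoose` says the ratio of the two binomials is `k (k - 1) / (n (n - 1)) ≤ k² / n²`.
  nlinarith [mul_nonneg (mul_nonneg (Nat.cast_nonneg k) (sub_nonneg.mpr hkn))
    (Nat.cast_nonneg (n.choose k) : (0 : ℝ) ≤ _)]

theorem exists_card_eq_sum_sum_le (w : α → α → ℝ) (hw : ∀ i j, 0 ≤ w i j)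
    (hdiag : ∀ i, w i i = 0) {k : ℕ} (hk : k ≤ Fintype.card α) :
    ∃ F : Finset α, #F = k ∧ ∑ i ∈ F, ∑ j ∈ F, w i j
      ≤ (k : ℝ) ^ 2 / (Fintype.card α : ℝ) ^ 2 * ∑ i, ∑ j, w i j := by
  set c : ℝ := (k : ℝ) ^ 2 / (Fintype.card α : ℝ) ^ 2
  have hsum : ∑ F ∈ powersetCard k univ, ∑ i ∈ F, ∑ j ∈ F, w i j
      ≤ ∑ _F ∈ powersetCard k (univ : Finset α), c * ∑ i, ∑ j, w i j :=
    calc ∑ F ∈ powersetCard k univ, ∑ i ∈ F, ∑ j ∈ F, w i j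
        = ∑ i, ∑ j, (#{F ∈ powersetCard k univ | {i, j} ⊆ F} : ℝ) * w i j :=
          sum_sum_sum_mem_eq_sum_sum_card_mul _ w
      _ ≤ ∑ i, ∑ j, c * (Fintype.card α).choose k * w i j := by
          refine sum_le_sum fun i _ => sum_le_sum fun j _ => ?_
          rcases eq_or_ne i j with rfl | hij
          · simp [hdiag]
          · exact mul_le_mul_of_nonneg_right
              (card_filter_pair_subset_powersetCard_le hij hk) (hw i j)
      _ = ∑ _F ∈ powersetCard k (univ : Finset α), c * ∑ i, ∑ j, w i j := by
          simp only [sum_const, card_powersetCard, card_univ, nsmul_eq_mul, mul_sum]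
          ring_nf
  obtain ⟨F, hF, hle⟩ := exists_le_of_sum_le (powersetCard_nonempty.mpr (by simpa using hk)) hsum
  exact ⟨F, (mem_powersetCard.mp hF).2, hle⟩

end

theorem stmt0 (n k : ℕ) (hk : k ≤ n) (A : Matrix (Fin n) (Fin n) ℝ)
    (hA : ∀ i j, 0 ≤ A i j) :
    ∃ F : Finset (Fin n), F.card = k ∧
      ∑ i ∈ F, ∑ j ∈ F, (if i ≠ j then A i j else 0) ≤
        ((k : ℝ) ^ 2 / (n : ℝ) ^ 2) *
          ∑ i : Fin n, ∑ j : Fin n, (if i ≠ j then A i j else 0) := by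
  have := exists_card_eq_sum_sum_le (fun i j => if i ≠ j then A i j else 0)
    (fun i j => by split_ifs <;> simp [hA]) (by simp) (k := k) (by simpa using hk)
  simpa only [Fintype.card_fin] using this
end

section
/- Let f : ℝ₊ⁿ → ℝ be C² with all second partial derivatives nonpositive on the nonnegative orthant and f(0) = 0. Then f is subadditive on the orthant: f(x+y) ≤ f(x) + f(y) for all x, y ∈ ℝ₊ⁿ. -/
/-!
Along the segment `t ↦ t • x`, the increment `f (t • x + y) - f (t • x)` has derivative
`Df (t • x + y) x - Df (t • x) x`, which is `≤ 0` because the directional derivative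
`Df (·) x` decreases along every direction of a convex cone containing `x` and `y`,
since its own derivative is the Hessian `D²f (·) y x ≤ 0`. Comparing `t = 1`
with `t = 0` gives `f (x + y) - f x ≤ f y - f 0`. On the orthant,
the sign of the Hessian on nonnegative vectors follows from the sign of the second partials
by bilinearity.
-/

open Set

section Cone

variable {E F : Type*} [NormedAddCommGroup E] [NormedSpace ℝ E]
  [NormedAddCommGroup F] [NormedSpace ℝ F]

theorem DifferentiableAt.hasDerivAt_comp_smul_add {g : E → F} {a v : E} {t : ℝ}
    (hg : DifferentiableAt ℝ g (t • v + a)) :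
    HasDerivAt (fun s : ℝ => g (s • v + a)) (fderiv ℝ g (t • v + a) v) t := by
  have hline : HasDerivAt (fun s : ℝ => s • v + a) v t := by
    simpa using ((hasDerivAt_id t).smul_const v).add_const a
  exact hg.hasFDerivAt.comp_hasDerivAt t hline

theorem apply_one_le_apply_zero_of_hasDerivAt_nonpos {φ φ' : ℝ → ℝ} (hφ : ∀ t, HasDerivAt φ (φ' t) t)
    (hφ' : ∀ t, 0 < t → φ' t ≤ 0) : φ 1 ≤ φ 0 := by
  have hanti : AntitoneOn φ (Ici 0) := by
    refine antitoneOn_of_hasDerivWithinAt_nonpos (convex_Ici 0)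
      (fun t _ => (hφ t).continuousAt.continuousWithinAt)
      (fun t _ => (hφ t).hasDerivWithinAt) ?_
    rw [interior_Ici]
    exact hφ'
  exact hanti self_mem_Ici (mem_Ici.2 zero_le_one) zero_le_one

variable {f : E → ℝ} (K : PointedCone ℝ E)

theorem fderiv_add_apply_le_of_mem_pointedCone (hf' : Differentiable ℝ (fderiv ℝ f))
    (hK : ∀ z ∈ K, ∀ v ∈ K, ∀ w ∈ K, fderiv ℝ (fderiv ℝ f) z v w ≤ 0)
    {a x y : E} (ha : a ∈ K) (hx : x ∈ K) (hy : y ∈ K) :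
    fderiv ℝ f (a + y) x ≤ fderiv ℝ f a x := by
  have hφ (s : ℝ) : HasDerivAt (fun s : ℝ => fderiv ℝ f (s • y + a) x)
      (fderiv ℝ (fderiv ℝ f) (s • y + a) y x) s :=
    (hf' _).hasDerivAt_comp_smul_add.clm_apply (hasDerivAt_const s x) |>.congr_deriv (by simp)
  simpa [add_comm] using apply_one_le_apply_zero_of_hasDerivAt_nonpos hφ
    fun s hs => hK _ (K.add_mem (K.smul_mem hs.le hy) ha) y hy x hx

theorem map_add_add_map_zero_le_of_mem_pointedCone (hf : Differentiable ℝ f)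
    (hf' : Differentiable ℝ (fderiv ℝ f))
    (hK : ∀ z ∈ K, ∀ v ∈ K, ∀ w ∈ K, fderiv ℝ (fderiv ℝ f) z v w ≤ 0)
    {x y : E} (hx : x ∈ K) (hy : y ∈ K) :
    f (x + y) + f 0 ≤ f x + f y := by
  have hψ (t : ℝ) : HasDerivAt (fun t : ℝ => f (t • x + y) - f (t • x + 0))
      (fderiv ℝ f (t • x + y) x - fderiv ℝ f (t • x + 0) x) t :=
    (hf _).hasDerivAt_comp_smul_add.sub (hf _).hasDerivAt_comp_smul_add
  have key := apply_one_le_apply_zero_of_hasDerivAt_nonpos hψ fun t ht => sub_nonpos.2 <| by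
    simpa using fderiv_add_apply_le_of_mem_pointedCone K hf' hK (K.smul_mem ht.le hx) hx hy
  simp only [one_smul, zero_smul, add_zero, zero_add] at key
  linarith

end Cone

theorem ContinuousLinearMap.apply_apply_nonpos_of_single_nonpos {ι : Type*} [Fintype ι]
    [DecidableEq ι] (B : (ι → ℝ) →L[ℝ] (ι → ℝ) →L[ℝ] ℝ)
    (hB : ∀ i j, B (Pi.single i 1) (Pi.single j 1) ≤ 0) {v w : ι → ℝ} (hv : 0 ≤ v)
    (hw : 0 ≤ w) : B v w ≤ 0 := by
  have hexpand : B v w = ∑ j, ∑ i, w j * (v i * B (Pi.single i 1) (Pi.single j 1)) := by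
    conv_lhs => rw [← (Pi.basisFun ℝ ι).sum_repr v, ← (Pi.basisFun ℝ ι).sum_repr w]
    simp [Finset.mul_sum]
  rw [hexpand]
  exact Finset.sum_nonpos fun j _ => Finset.sum_nonpos fun i _ =>
    mul_nonpos_of_nonneg_of_nonpos (hw j) (mul_nonpos_of_nonneg_of_nonpos (hv i) (hB i j))

theorem fderiv_fderiv_apply_eq {E F : Type*} [NormedAddCommGroup E] [NormedSpace ℝ E]
    [NormedAddCommGroup F] [NormedSpace ℝ F] {f : E → F} {x : E}
    (hf' : DifferentiableAt ℝ (fderiv ℝ f) x) (u v : E) :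
    fderiv ℝ (fun y => fderiv ℝ f y u) x v = fderiv ℝ (fderiv ℝ f) x v u := by
  simp [fderiv_clm_apply hf' (differentiableAt_const u)]

theorem stmt2 (n : ℕ) (f : (Fin n → ℝ) → ℝ)
    (hf : ContDiff ℝ 2 f)
    (hsec : ∀ x : Fin n → ℝ, (∀ i, 0 ≤ x i) → ∀ i j : Fin n,
      fderiv ℝ (fun y => fderiv ℝ f y (Pi.single i 1)) x (Pi.single j 1) ≤ 0)
    (hf0 : f 0 = 0)
    (x y : Fin n → ℝ) (hx : ∀ i, 0 ≤ x i) (hy : ∀ i, 0 ≤ y i) :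
    f (x + y) ≤ f x + f y := by
  have hdf : Differentiable ℝ f := hf.differentiable two_ne_zero
  have hdf' : Differentiable ℝ (fderiv ℝ f) :=
    (hf.fderiv_right le_rfl).differentiable one_ne_zero
  have hK : ∀ z ∈ PointedCone.positive ℝ (Fin n → ℝ), ∀ v ∈ PointedCone.positive ℝ _,
      ∀ w ∈ PointedCone.positive ℝ _, fderiv ℝ (fderiv ℝ f) z v w ≤ 0 := by
    intro z hz v hv w hw
    refine (fderiv ℝ (fderiv ℝ f) z).apply_apply_nonpos_of_single_nonpos (fun j i => ?_) hv hw
    rw [← fderiv_fderiv_apply_eq (hdf' z)]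
    exact hsec z hz i j
  simpa [hf0] using map_add_add_map_zero_le_of_mem_pointedCone _ hdf hdf' hK hx hy
end

section
/- Let (Z_t) be a Markov chain on a finite subset of ℝⁿ such that (i) for some ρ < 1 and all pairs of initial states z₀, z̃₀ there is a coupling with E[∑ᵢ |Z_t(i) − Z̃_t(i)|] ≤ ρᵗ ∑ᵢ |z₀(i) − z̃₀(i)|, and (ii) ∑ᵢ |Z_t(i) − Z_{t−1}(i)| ≤ R almost surely for all t. Then for every t and every starting state z, Var_z(∑ᵢ Z_t(i)) ≤ 2R²/(1 − ρ²). -/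
/-!
Write `f a = ∑ i, φ a i` and `m_t = P ^ t *ᵥ f` for the conditional means. Conditioning on the
first step (law of total variance),
`Var_z f(Z_{t+1}) = E_z[Var_{Z_1} f(Z_t)] + Var_z m_t(Z_1)`.
The coupling makes `m_t` a `ρ ^ t`-Lipschitz function for the ℓ¹ distance, and `Z_1` lies
within ℓ¹ distance `R` of `z`, so comparing `m_t(Z_1)` with `m_t(z)` bounds the last term by
`(ρ ^ t R)²`.
Summing the geometric series gives `Var_z f(Z_t) ≤ R² / (1 - ρ²)`.
-/

open Finset Matrix

section WeightedVar

variable {α : Type*} [Fintype α] {w f : α → ℝ}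

def weightedVar (w f : α → ℝ) : ℝ := ∑ a, w a * (f a - w ⬝ᵥ f) ^ 2

theorem sum_mul_sub_sq_eq_weightedVar_add (hw : ∑ a, w a = 1) (c : ℝ) :
    ∑ a, w a * (f a - c) ^ 2 = weightedVar w f + (w ⬝ᵥ f - c) ^ 2 := by
  set μ := w ⬝ᵥ f with hμ
  have hexpand : ∀ a, w a * (f a - c) ^ 2 = w a * (f a - μ) ^ 2
      + 2 * (μ - c) * (w a * f a) + ((μ - c) ^ 2 - 2 * (μ - c) * μ) * w a := fun a => by ring
  simp only [hexpand, sum_add_distrib, ← mul_sum, hw, weightedVar, ← hμ]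
  rw [hμ, dotProduct]
  ring

theorem weightedVar_le_sum_mul_sub_sq (hw : ∑ a, w a = 1) (c : ℝ) :
    weightedVar w f ≤ ∑ a, w a * (f a - c) ^ 2 := by
  rw [sum_mul_sub_sq_eq_weightedVar_add hw c]
  exact le_add_of_nonneg_right (sq_nonneg _)

theorem dotProduct_le_of_le_of_pos {B : ℝ} (hw0 : ∀ a, 0 ≤ w a) (hw1 : ∑ a, w a = 1)
    (h : ∀ a, 0 < w a → f a ≤ B) : w ⬝ᵥ f ≤ B :=
  calc ∑ a, w a * f a ≤ ∑ a, w a * B := sum_le_sum fun a _ => by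
        rcases (hw0 a).eq_or_lt with hzero | hpos
        · simp [← hzero]
        · exact mul_le_mul_of_nonneg_left (h a hpos) hpos.le
    _ = B := by rw [← sum_mul, hw1, one_mul]

theorem abs_dotProduct_sub_le_of_coupling {μ ν : α → ℝ} {q : α → α → ℝ}
    (hq0 : ∀ a b, 0 ≤ q a b) (hμ : ∀ a, ∑ b, q a b = μ a)
    (hν : ∀ b, ∑ a, q a b = ν b) :
    |μ ⬝ᵥ f - ν ⬝ᵥ f| ≤ ∑ a, ∑ b, q a b * |f a - f b| := by
  have hdiff : μ ⬝ᵥ f - ν ⬝ᵥ f = ∑ a, ∑ b, q a b * (f a - f b) := by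
    simp only [dotProduct, ← hμ, ← hν, sum_mul, mul_sub, sum_sub_distrib]
    rw [sum_comm (f := fun b a => q a b * f b)]
  calc |μ ⬝ᵥ f - ν ⬝ᵥ f| ≤ ∑ a, |∑ b, q a b * (f a - f b)| :=
        hdiff ▸ abs_sum_le_sum_abs _ _
    _ ≤ ∑ a, ∑ b, |q a b * (f a - f b)| := sum_le_sum fun a _ => abs_sum_le_sum_abs _ _
    _ = ∑ a, ∑ b, q a b * |f a - f b| := by simp only [abs_mul, abs_of_nonneg (hq0 _ _)]

end WeightedVar

section MarkovChain

variable {α : Type*} [Fintype α] {P : Matrix α α ℝ}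

theorem weightedVar_mul_row {Q : Matrix α α ℝ} (hQ : ∀ a, ∑ b, Q a b = 1) (f : α → ℝ)
    (z : α) :
    weightedVar ((P * Q) z) f
      = ∑ a, P z a * weightedVar (Q a) f + weightedVar (P z) (Q *ᵥ f) := by
  set c := (P * Q) z ⬝ᵥ f
  have hc : P z ⬝ᵥ (Q *ᵥ f) = c := congrFun (mulVec_mulVec f P Q) z
  calc weightedVar ((P * Q) z) f = ∑ b, ∑ a, P z a * (Q a b * (f b - c) ^ 2) := by
        simp only [weightedVar, mul_apply, sum_mul, mul_assoc]
        rfl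
    _ = ∑ a, P z a * (weightedVar (Q a) f + ((Q *ᵥ f) a - c) ^ 2) := by
        rw [sum_comm]
        simp only [← mul_sum, sum_mul_sub_sq_eq_weightedVar_add (hQ _)]
        rfl
    _ = _ := by
        rw [weightedVar, hc, ← sum_add_distrib]
        simp only [mul_add]

variable [DecidableEq α]

theorem weightedVar_pow_le_sum (hP : P ∈ rowStochastic ℝ α) (f : α → ℝ) {ε : ℕ → ℝ}
    (hε : ∀ t z, weightedVar (P z) (P ^ t *ᵥ f) ≤ ε t) (t : ℕ) (z : α) :
    weightedVar ((P ^ t) z) f ≤ ∑ s ∈ range t, ε s := by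
  induction t generalizing z with
  | zero => simp [weightedVar, dotProduct, one_apply]
  | succ t ih =>
    rw [pow_succ', weightedVar_mul_row (sum_row_of_mem_rowStochastic (pow_mem hP t)),
      sum_range_succ]
    exact add_le_add (dotProduct_le_of_le_of_pos (fun a => nonneg_of_mem_rowStochastic hP)
      (sum_row_of_mem_rowStochastic hP z) fun a _ => ih a) (hε t z)

variable {ρ R : ℝ} {d : α → α → ℝ} {f : α → ℝ}

theorem abs_pow_mulVec_sub_le (hf : ∀ a b, |f a - f b| ≤ d a b)
    (hcoupling : ∀ (t : ℕ) (z₀ z₀' : α), ∃ q : α → α → ℝ,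
      (∀ a b, 0 ≤ q a b) ∧
      (∀ a, ∑ b, q a b = (P ^ t) z₀ a) ∧
      (∀ b, ∑ a, q a b = (P ^ t) z₀' b) ∧
      ∑ a, ∑ b, q a b * d a b ≤ ρ ^ t * d z₀ z₀')
    (t : ℕ) (a b : α) :
    |(P ^ t *ᵥ f) a - (P ^ t *ᵥ f) b| ≤ ρ ^ t * d a b := by
  obtain ⟨q, hq0, hqa, hqb, hcost⟩ := hcoupling t a b
  calc |(P ^ t *ᵥ f) a - (P ^ t *ᵥ f) b| ≤ ∑ c, ∑ c', q c c' * |f c - f c'| :=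
        abs_dotProduct_sub_le_of_coupling hq0 hqa hqb
    _ ≤ ∑ c, ∑ c', q c c' * d c c' := by
        gcongr with c _ c' _
        · exact hq0 c c'
        · exact hf c c'
    _ ≤ ρ ^ t * d a b := hcost

theorem weightedVar_row_pow_mulVec_le (hP : P ∈ rowStochastic ℝ α) (hρ0 : 0 ≤ ρ)
    (hf : ∀ a b, |f a - f b| ≤ d a b)
    (hcoupling : ∀ (t : ℕ) (z₀ z₀' : α), ∃ q : α → α → ℝ,
      (∀ a b, 0 ≤ q a b) ∧
      (∀ a, ∑ b, q a b = (P ^ t) z₀ a) ∧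
      (∀ b, ∑ a, q a b = (P ^ t) z₀' b) ∧
      ∑ a, ∑ b, q a b * d a b ≤ ρ ^ t * d z₀ z₀')
    (hstep : ∀ a b, 0 < P a b → d a b ≤ R) (t : ℕ) (z : α) :
    weightedVar (P z) (P ^ t *ᵥ f) ≤ (ρ ^ t * R) ^ 2 := by
  have hrow := sum_row_of_mem_rowStochastic hP z
  refine (weightedVar_le_sum_mul_sub_sq hrow ((P ^ t *ᵥ f) z)).trans ?_
  refine dotProduct_le_of_le_of_pos (fun a => nonneg_of_mem_rowStochastic hP) hrow fun a ha => ?_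
  rw [sq_le_sq, abs_sub_comm]
  calc |(P ^ t *ᵥ f) z - (P ^ t *ᵥ f) a| ≤ ρ ^ t * d z a :=
        abs_pow_mulVec_sub_le hf hcoupling t z a
    _ ≤ ρ ^ t * R := mul_le_mul_of_nonneg_left (hstep z a ha) (pow_nonneg hρ0 t)
    _ ≤ |ρ ^ t * R| := le_abs_self _

end MarkovChain

theorem stmt3_general {α : Type*} [Fintype α] [DecidableEq α] (n : ℕ)
    (φ : α → Fin n → ℝ) (P : Matrix α α ℝ)
    (hP0 : ∀ a b, 0 ≤ P a b) (hP1 : ∀ a, ∑ b, P a b = 1)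
    (ρ R : ℝ) (hρ0 : 0 ≤ ρ) (hρ1 : ρ < 1)
    (hstep : ∀ a b, 0 < P a b → ∑ i, |φ a i - φ b i| ≤ R)
    (hcoupling : ∀ (t : ℕ) (z₀ z₀' : α), ∃ q : α → α → ℝ,
      (∀ a b, 0 ≤ q a b) ∧
      (∀ a, ∑ b, q a b = (P ^ t) z₀ a) ∧
      (∀ b, ∑ a, q a b = (P ^ t) z₀' b) ∧
      ∑ a, ∑ b, q a b * (∑ i, |φ a i - φ b i|) ≤
        ρ ^ t * ∑ i, |φ z₀ i - φ z₀' i|)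
    (t : ℕ) (z : α) :
    ∑ a, (P ^ t) z a * ((∑ i, φ a i) - ∑ b, (P ^ t) z b * ∑ i, φ b i) ^ 2
      ≤ 2 * R ^ 2 / (1 - ρ ^ 2) := by
  have hP : P ∈ rowStochastic ℝ α := mem_rowStochastic_iff_sum.2 ⟨hP0, hP1⟩
  have hρ2 : ρ ^ 2 < 1 := by nlinarith
  have hφ : ∀ a b, |∑ i, φ a i - ∑ i, φ b i| ≤ ∑ i, |φ a i - φ b i| := fun a b => by
    rw [← sum_sub_distrib]
    exact abs_sum_le_sum_abs _ _
  calc weightedVar ((P ^ t) z) (fun a => ∑ i, φ a i)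
      ≤ ∑ s ∈ range t, (ρ ^ s * R) ^ 2 :=
        weightedVar_pow_le_sum hP _ (weightedVar_row_pow_mulVec_le hP hρ0 hφ hcoupling hstep) t z
    _ = R ^ 2 * ∑ s ∈ Ico 0 t, (ρ ^ 2) ^ s := by
        rw [range_eq_Ico, mul_sum]
        exact sum_congr rfl fun s _ => by ring
    _ ≤ R ^ 2 * ((ρ ^ 2) ^ 0 / (1 - ρ ^ 2)) := by
        gcongr
        exact geom_sum_Ico_le_of_lt_one (sq_nonneg ρ) hρ2
    _ ≤ 2 * R ^ 2 / (1 - ρ ^ 2) := by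
        rw [pow_zero, mul_one_div]
        have : 0 < 1 - ρ ^ 2 := by linarith
        gcongr
        linarith [sq_nonneg R]

/-- Variance bound for a contracting Markov chain on a finite subset of ℝⁿ.
The chain is given by a row-stochastic transition matrix `P` on a finite state
space `α`, embedded in `ℝⁿ` via `φ`.  Hypotheses: (i) an ℓ¹-contracting coupling
of the time-`t` distributions from any two starting states, and (ii) each step
moves the configuration by ℓ¹-distance at most `R`.  Conclusion: the variance of
the coordinate sum at any time `t`, from any start `z`, is at most `2R²/(1-ρ²)`. -/
theorem stmt3 {α : Type*} [Fintype α] [DecidableEq α] [Nonempty α] (n : ℕ)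
    (φ : α → Fin n → ℝ) (P : Matrix α α ℝ)
    (hP0 : ∀ a b, 0 ≤ P a b) (hP1 : ∀ a, ∑ b, P a b = 1)
    (ρ R : ℝ) (hρ0 : 0 ≤ ρ) (hρ1 : ρ < 1) (hR : 0 ≤ R)
    (hstep : ∀ a b, 0 < P a b → ∑ i, |φ a i - φ b i| ≤ R)
    (hcoupling : ∀ (t : ℕ) (z₀ z₀' : α), ∃ q : α → α → ℝ,
      (∀ a b, 0 ≤ q a b) ∧
      (∀ a, ∑ b, q a b = (P ^ t) z₀ a) ∧
      (∀ b, ∑ a, q a b = (P ^ t) z₀' b) ∧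
      ∑ a, ∑ b, q a b * (∑ i, |φ a i - φ b i|) ≤
        ρ ^ t * ∑ i, |φ z₀ i - φ z₀' i|)
    (t : ℕ) (z : α) :
    ∑ a, (P ^ t) z a * ((∑ i, φ a i) - ∑ b, (P ^ t) z b * ∑ i, φ b i) ^ 2
      ≤ 2 * R ^ 2 / (1 - ρ ^ 2) :=
  stmt3_general n φ P hP0 hP1 ρ R hρ0 hρ1 hstep hcoupling t z
end

section
/- (Corollary of GHS) In the ferromagnetic Ising model with zero external field, for any vertex u and distinct vertices v₁, …, v_k, E_μ[σ(u) | σ(v₁) = ⋯ = σ(v_k) = 1] ≤ ∑_{i=1}^{k} E_μ[σ(u) | σ(vᵢ) = 1]. -/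
open Finset

/-- Spin value: `true ↦ 1`, `false ↦ -1`. -/
noncomputable def spin (b : Bool) : ℝ := if b then 1 else -1

/-- Unnormalized Gibbs weight of the Ising model with interactions `J` and external
field `H`. -/
noncomputable def isingWeightH {V : Type*} [Fintype V] [DecidableEq V]
    (J : V → V → ℝ) (H : V → ℝ) (σ : V → Bool) : ℝ :=
  Real.exp ((∑ u, ∑ v, J u v * spin (σ u) * spin (σ v)) + ∑ v, H v * spin (σ v))

/-- The local magnetization `m_u(H) = E_{μ^H}[σ(u)]`. -/
noncomputable def magnet {V : Type*} [Fintype V] [DecidableEq V]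
    (J : V → V → ℝ) (u : V) (H : V → ℝ) : ℝ :=
  (∑ σ : V → Bool, spin (σ u) * isingWeightH J H σ) /
    ∑ σ : V → Bool, isingWeightH J H σ

/-- The Ising Gibbs probability of a configuration (zero external field). -/
noncomputable def isingMeasure {V : Type*} [Fintype V] [DecidableEq V]
    (J : V → V → ℝ) (σ : V → Bool) : ℝ :=
  isingWeightH J 0 σ / ∑ τ : V → Bool, isingWeightH J 0 τ

/-- Conditional expectation of the spin at `u` given `σ(v) = 1` for every `v ∈ A`. -/
noncomputable def condMagnetOn {V : Type*} [Fintype V] [DecidableEq V]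
    (J : V → V → ℝ) (u : V) (A : Finset V) : ℝ :=
  (∑ σ ∈ Finset.univ.filter (fun σ : V → Bool => ∀ v ∈ A, σ v = true),
      spin (σ u) * isingMeasure J σ) /
    ∑ σ ∈ Finset.univ.filter (fun σ : V → Bool => ∀ v ∈ A, σ v = true),
      isingMeasure J σ


/-!
Let `m(H)` be the magnetization at `u` in the field `H`. Integrating the GHS inequality along a
segment shows that `H ↦ Dm(H) H₁` decreases in nonnegative directions, and integrating once more
gives `m(H₁ + H₂) + m(0) ≤ m(H₁) + m(H₂)` on the nonnegative orthant. Spin-flip symmetry gives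
`m(0) = 0`, so `m` is subadditive there, in particular on the fields
`h · 1_A = ∑_{a ∈ A} h · 1_{a}`.
After dividing every Gibbs weight by `exp(h |A|)`, a configuration `σ` carries the extra factor
`exp(h ∑_{w ∈ A} (σ_w - 1))`, which tends to the indicator of `{σ = 1 on A}` as `h → ∞`. Hence
`m(h · 1_A) → E[σ(u) | σ = 1 on A]`, and the inequality passes to the limit.
-/

open Filter Topology

lemma apply_add_le_of_fderiv_nonpos {E : Type*} [NormedAddCommGroup E] [NormedSpace ℝ E]
    {g : E → ℝ} (hg : Differentiable ℝ g) {a d : E}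
    (h : ∀ t : ℝ, 0 < t → fderiv ℝ g (a + t • d) d ≤ 0) : g (a + d) ≤ g a := by
  have hline : ∀ t : ℝ, HasDerivAt (fun t : ℝ => g (a + t • d)) (fderiv ℝ g (a + t • d) d) t :=
    fun t => hg.differentiableAt.hasFDerivAt.comp_hasDerivAt t
      (by simpa using ((hasDerivAt_id t).smul_const d).const_add a)
  have hanti : AntitoneOn (fun t : ℝ => g (a + t • d)) (Set.Ici 0) :=
    antitoneOn_of_hasDerivWithinAt_nonpos (convex_Ici 0)
      (fun t _ => (hline t).continuousAt.continuousWithinAt)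
      (fun t _ => (hline t).hasDerivWithinAt)
      (fun t ht => h t (by simpa using ht))
  simpa using hanti Set.self_mem_Ici (Set.mem_Ici.2 zero_le_one) zero_le_one

lemma ContDiff.hasFDerivAt_fderiv_apply {E : Type*} [NormedAddCommGroup E] [NormedSpace ℝ E]
    {f : E → ℝ} (hf : ContDiff ℝ 2 f) (x H : E) :
    HasFDerivAt (fun H' => fderiv ℝ f H' x) ((fderiv ℝ (fderiv ℝ f) H).flip x) H := by
  have hdf : Differentiable ℝ (fderiv ℝ f) :=
    (hf.fderiv_right (m := 1) (by norm_num)).differentiable (by norm_num)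
  simpa using hdf.differentiableAt.hasFDerivAt.clm_apply (hasFDerivAt_const x H)

section SecondPartials

variable {V : Type*} [Fintype V] [DecidableEq V]

def HasNonposSecondPartials (f : (V → ℝ) → ℝ) : Prop :=
  ∀ H : V → ℝ, 0 ≤ H → ∀ v w : V,
    fderiv ℝ (fun H' => fderiv ℝ f H' (Pi.single v 1)) H (Pi.single w 1) ≤ 0

lemma ContinuousLinearMap.apply_nonpos_of_apply_single_nonpos (L : (V → ℝ) →L[ℝ] ℝ)
    (hL : ∀ v, L (Pi.single v 1) ≤ 0) {x : V → ℝ} (hx : 0 ≤ x) : L x ≤ 0 := by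
  rw [← Finset.univ_sum_single x, map_sum]
  refine Finset.sum_nonpos fun v _ => ?_
  rw [← mul_one (x v), ← smul_eq_mul, Pi.single_smul', map_smul, smul_eq_mul]
  exact mul_nonpos_of_nonneg_of_nonpos (hx v) (hL v)

lemma HasNonposSecondPartials.fderiv_fderiv_apply_nonpos {f : (V → ℝ) → ℝ}
    (hf : ContDiff ℝ 2 f) (hf₂ : HasNonposSecondPartials f) {H x y : V → ℝ}
    (hH : 0 ≤ H) (hx : 0 ≤ x) (hy : 0 ≤ y) :
    fderiv ℝ (fderiv ℝ f) H y x ≤ 0 := by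
  have hpartial : ∀ v w, fderiv ℝ (fderiv ℝ f) H (Pi.single w 1) (Pi.single v 1) ≤ 0 := by
    intro v w
    simpa [(hf.hasFDerivAt_fderiv_apply _ H).fderiv] using hf₂ H hH v w
  refine (fderiv ℝ (fderiv ℝ f) H y).apply_nonpos_of_apply_single_nonpos (fun v => ?_) hx
  exact ((fderiv ℝ (fderiv ℝ f) H).flip (Pi.single v 1)).apply_nonpos_of_apply_single_nonpos
    (hpartial v) hy

lemma HasNonposSecondPartials.fderiv_add_apply_le {f : (V → ℝ) → ℝ}
    (hf : ContDiff ℝ 2 f) (hf₂ : HasNonposSecondPartials f) {A H₁ H₂ : V → ℝ}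
    (hA : 0 ≤ A) (h₁ : 0 ≤ H₁) (h₂ : 0 ≤ H₂) :
    fderiv ℝ f (A + H₂) H₁ ≤ fderiv ℝ f A H₁ := by
  refine apply_add_le_of_fderiv_nonpos (g := fun H => fderiv ℝ f H H₁)
    (fun H => (hf.hasFDerivAt_fderiv_apply H₁ H).differentiableAt) fun t ht => ?_
  rw [(hf.hasFDerivAt_fderiv_apply H₁ _).fderiv, ContinuousLinearMap.flip_apply]
  have hAt : 0 ≤ A + t • H₂ := add_nonneg hA (smul_nonneg ht.le h₂)
  exact hf₂.fderiv_fderiv_apply_nonpos hf hAt h₁ h₂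

lemma HasNonposSecondPartials.apply_add_add_le {f : (V → ℝ) → ℝ}
    (hf : ContDiff ℝ 2 f) (hf₂ : HasNonposSecondPartials f) {H₁ H₂ : V → ℝ}
    (h₁ : 0 ≤ H₁) (h₂ : 0 ≤ H₂) :
    f (H₁ + H₂) + f 0 ≤ f H₁ + f H₂ := by
  have hdf : Differentiable ℝ f := hf.differentiable (by norm_num)
  have hshift : Differentiable ℝ fun H => f (H₂ + H) :=
    hdf.comp ((differentiable_const H₂).add differentiable_id)
  have key := apply_add_le_of_fderiv_nonpos (g := fun H => f (H₂ + H) - f H) (a := 0) (d := H₁)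
    (hshift.sub hdf) fun t ht => by
      rw [fderiv_fun_sub hshift.differentiableAt hdf.differentiableAt, fderiv_comp_add_left,
        sub_apply, sub_nonpos, add_comm H₂]
      exact hf₂.fderiv_add_apply_le hf (by simpa using smul_nonneg ht.le h₁) h₁ h₂
  simp only [zero_add, add_zero] at key
  rw [add_comm H₁]
  linarith

lemma HasNonposSecondPartials.apply_sum_le {f : (V → ℝ) → ℝ}
    (hf : ContDiff ℝ 2 f) (hf₂ : HasNonposSecondPartials f) (hf₀ : f 0 = 0)
    {ι : Type*} (s : Finset ι) {H : ι → V → ℝ} (hH : ∀ i ∈ s, 0 ≤ H i) :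
    f (∑ i ∈ s, H i) ≤ ∑ i ∈ s, f (H i) :=
  Finset.le_sum_of_subadditive_on_pred f (0 ≤ ·) hf₀.le
    (fun _ _ hx hy => by linarith [hf₂.apply_add_add_le hf hx hy])
    (fun _ _ => add_nonneg) H hH

end SecondPartials

section FieldOn

variable {V : Type*} [DecidableEq V]

def fieldOn (A : Finset V) (h : ℝ) : V → ℝ := fun w => if w ∈ A then h else 0

lemma fieldOn_nonneg (A : Finset V) {h : ℝ} (hh : 0 ≤ h) : 0 ≤ fieldOn A h := fun w => by
  unfold fieldOn; split_ifs <;> simp [hh]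

lemma fieldOn_eq_sum_singleton (A : Finset V) (h : ℝ) :
    fieldOn A h = ∑ a ∈ A, fieldOn {a} h := by
  ext w
  simp [fieldOn, Finset.sum_apply]

end FieldOn

section Ising

variable {V : Type*} [Fintype V] [DecidableEq V] (J : V → V → ℝ) (u : V)

lemma spin_not (b : Bool) : spin (!b) = -spin b := by cases b <;> simp [spin]

lemma sum_isingWeightH_pos (H : V → ℝ) : 0 < ∑ σ : V → Bool, isingWeightH J H σ :=
  Finset.sum_pos (fun _ _ => Real.exp_pos _) Finset.univ_nonempty

lemma isingMeasure_pos (σ : V → Bool) : 0 < isingMeasure J σ :=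
  div_pos (Real.exp_pos _) (sum_isingWeightH_pos J 0)

lemma contDiff_magnet : ContDiff ℝ 2 (magnet J u) := by
  have hweight : ∀ σ : V → Bool, ContDiff ℝ 2 fun H : V → ℝ => isingWeightH J H σ := fun σ =>
    Real.contDiff_exp.comp <| contDiff_const.add <| ContDiff.sum fun v _ =>
      (contDiff_apply ℝ ℝ v).mul contDiff_const
  exact (ContDiff.sum fun σ _ => contDiff_const.mul (hweight σ)).div
    (ContDiff.sum fun σ _ => hweight σ) fun H => (sum_isingWeightH_pos J H).ne'

lemma isingWeightH_zero_not (σ : V → Bool) :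
    isingWeightH J 0 (fun v => !σ v) = isingWeightH J 0 σ := by
  simp only [isingWeightH, Pi.zero_apply, zero_mul, Finset.sum_const_zero, add_zero, spin_not,
    neg_mul, mul_neg, neg_neg, neg_zero]

lemma magnet_zero : magnet J u 0 = 0 := by
  let flip : Equiv.Perm (V → Bool) :=
    Function.Involutive.toPerm (fun σ v => !σ v) fun σ => by simp
  have hodd : ∑ σ : V → Bool, spin (σ u) * isingWeightH J 0 σ =
      -∑ σ : V → Bool, spin (σ u) * isingWeightH J 0 σ := by
    conv_lhs => rw [← Equiv.sum_comp flip]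
    rw [← Finset.sum_neg_distrib]
    refine Finset.sum_congr rfl fun σ _ => ?_
    change spin (!σ u) * isingWeightH J 0 (fun v => !σ v) = _
    rw [spin_not, isingWeightH_zero_not, neg_mul]
  rw [magnet, eq_zero_of_neg_eq hodd.symm, zero_div]

lemma isingWeightH_fieldOn (A : Finset V) (h : ℝ) (σ : V → Bool) :
    isingWeightH J (fieldOn A h) σ =
      ((∑ τ, isingWeightH J 0 τ) * Real.exp (h * #A)) *
        (isingMeasure J σ * Real.exp (h * ∑ w ∈ A, (spin (σ w) - 1))) := by
  have hZ := (sum_isingWeightH_pos J 0).ne'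
  have hfield : ∑ v, fieldOn A h v * spin (σ v) = h * #A + h * ∑ w ∈ A, (spin (σ w) - 1) := by
    simp only [fieldOn, ite_mul, zero_mul, Finset.sum_ite_mem, Finset.univ_inter,
      Finset.sum_sub_distrib, ← Finset.mul_sum, Finset.sum_const, nsmul_one]
    ring
  simp only [isingMeasure, isingWeightH, hfield, Pi.zero_apply, zero_mul, Finset.sum_const_zero,
    add_zero, Real.exp_add]
  field_simp

lemma magnet_fieldOn (A : Finset V) (h : ℝ) :
    magnet J u (fieldOn A h) =
      (∑ σ : V → Bool, spin (σ u) *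
          (isingMeasure J σ * Real.exp (h * ∑ w ∈ A, (spin (σ w) - 1)))) /
        ∑ σ : V → Bool, isingMeasure J σ * Real.exp (h * ∑ w ∈ A, (spin (σ w) - 1)) := by
  have hc : (∑ τ, isingWeightH J 0 τ) * Real.exp (h * #A) ≠ 0 :=
    mul_ne_zero (sum_isingWeightH_pos J 0).ne' (Real.exp_pos _).ne'
  simp only [magnet, isingWeightH_fieldOn, mul_left_comm (spin _), ← Finset.mul_sum]
  exact mul_div_mul_left _ _ hc

lemma tendsto_exp_mul_sum_spin_sub_one (A : Finset V) (σ : V → Bool) :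
    Tendsto (fun h : ℝ => Real.exp (h * ∑ w ∈ A, (spin (σ w) - 1))) atTop
      (𝓝 (if ∀ w ∈ A, σ w = true then 1 else 0)) := by
  split_ifs with hσ
  · have hzero : ∑ w ∈ A, (spin (σ w) - 1) = 0 :=
      Finset.sum_eq_zero fun w hw => by simp [hσ w hw, spin]
    simp [hzero]
  · push Not at hσ
    obtain ⟨w, hw, hσw⟩ := hσ
    have hneg : ∑ w ∈ A, (spin (σ w) - 1) < 0 :=
      Finset.sum_neg' (fun w _ => by cases σ w <;> norm_num [spin])
        ⟨w, hw, by simp [hσw, spin]⟩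
    exact Real.tendsto_exp_atBot.comp (tendsto_id.atTop_mul_const_of_neg hneg)

lemma tendsto_magnet_fieldOn (A : Finset V) :
    Tendsto (fun h => magnet J u (fieldOn A h)) atTop (𝓝 (condMagnetOn J u A)) := by
  set P : (V → Bool) → Prop := fun σ => ∀ w ∈ A, σ w = true
  have hE := tendsto_exp_mul_sum_spin_sub_one A
  have hden : ∑ σ : V → Bool, isingMeasure J σ * (if P σ then 1 else 0) ≠ 0 := by
    refine (Finset.sum_pos' (fun σ _ => ?_) ⟨fun _ => true, Finset.mem_univ _, ?_⟩).ne'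
    · have := (isingMeasure_pos J σ).le
      split_ifs <;> simp [this]
    · simpa [P] using isingMeasure_pos J _
  have hlim := (tendsto_finsetSum Finset.univ fun σ _ =>
      ((hE σ).const_mul (isingMeasure J σ)).const_mul (spin (σ u))).div
    (tendsto_finsetSum Finset.univ fun σ _ => (hE σ).const_mul (isingMeasure J σ)) hden
  convert hlim.congr fun h => (magnet_fieldOn J u A h).symm using 2
  unfold condMagnetOn
  rw [Finset.sum_filter, Finset.sum_filter]
  simp only [mul_ite, mul_one, mul_zero]

lemma condMagnetOn_le_sum_singleton (hGHS : HasNonposSecondPartials (magnet J u))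
    (A : Finset V) : condMagnetOn J u A ≤ ∑ a ∈ A, condMagnetOn J u {a} := by
  refine le_of_tendsto_of_tendsto (tendsto_magnet_fieldOn J u A)
    (tendsto_finsetSum A fun a _ => tendsto_magnet_fieldOn J u {a})
    (eventually_atTop.2 ⟨0, fun h hh => ?_⟩)
  dsimp only
  rw [fieldOn_eq_sum_singleton]
  exact hGHS.apply_sum_le (contDiff_magnet J u) (magnet_zero J u) A
    fun a _ => fieldOn_nonneg {a} hh

end Ising

theorem stmt13_general {V : Type*} [Fintype V] [DecidableEq V]
    (J : V → V → ℝ) (u : V)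
    (hGHS : ∀ H : V → ℝ, (∀ v, 0 ≤ H v) → ∀ v w : V,
      fderiv ℝ (fun H' => fderiv ℝ (magnet J u) H' (Pi.single v 1)) H
        (Pi.single w 1) ≤ 0)
    (k : ℕ) (v : Fin k → V) (hv : Function.Injective v) :
    condMagnetOn J u (Finset.image v Finset.univ) ≤
      ∑ i : Fin k, condMagnetOn J u {v i} :=
  (condMagnetOn_le_sum_singleton J u hGHS _).trans_eq (Finset.sum_image hv.injOn)

/-- Corollary of the GHS inequality: in the ferromagnetic Ising model with zero
external field, for any vertex `u` and distinct vertices `v₁, …, v_k`,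
`E_μ[σ(u) ∣ σ(v₁) = ⋯ = σ(v_k) = 1] ≤ ∑ᵢ E_μ[σ(u) ∣ σ(vᵢ) = 1]`.  The GHS
inequality (nonpositive second partials of the magnetization in the external field,
on the nonnegative orthant) is taken as a hypothesis. -/
theorem stmt13 {V : Type*} [Fintype V] [DecidableEq V]
    (J : V → V → ℝ) (hJ : ∀ u v, 0 ≤ J u v) (hJsymm : ∀ u v, J u v = J v u) (u : V)
    (hGHS : ∀ H : V → ℝ, (∀ v, 0 ≤ H v) → ∀ v w : V,
      fderiv ℝ (fun H' => fderiv ℝ (magnet J u) H' (Pi.single v 1)) H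
        (Pi.single w 1) ≤ 0)
    (k : ℕ) (v : Fin k → V) (hv : Function.Injective v) :
    condMagnetOn J u (Finset.image v Finset.univ) ≤
      ∑ i : Fin k, condMagnetOn J u {v i} :=
  stmt13_general J u hGHS k v hv
end
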